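/- Suppose T is an ω₁-tree and S₁, S₂ are sets of countable limit ordinals whose symmetric difference is nonstationary. Then T is S₁-*-special (in the weak sense) if and only if T is S₂-*-special (in the weak sense). -/

import Mathlib

open Cardinal Set

/-- The first uncountable ordinal. -/
noncomputable def omega1 : Ordinal := (Cardinal.aleph 1).ord

universe v

/-- A tree of height `ω₁`: a partial order equipped with a rank (height) function into the
countable ordinals which is strictly monotone, has countable levels, and whose sets of
predecessors are linearly ordered. -/
structure OmegaOneTree (T : Type*) [PartialOrder T] where
  rk : T → Ordinal.{v}
  rk_lt_omega1 : ∀ x, rk x < omega1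
  rk_strictMono : ∀ {x y : T}, x < y → rk x < rk y
  levels_countable : ∀ β : Ordinal, {x : T | rk x = β}.Countable
  pred_linear : ∀ x y z : T, y ≤ x → z ≤ x → y ≤ z ∨ z ≤ y

/-- `C` is a closed unbounded subset of `ω₁`. -/
def IsClubBelow (C : Set Ordinal) : Prop :=
  C ⊆ Set.Iio omega1 ∧ (∀ α < omega1, ∃ β ∈ C, α < β) ∧
    ∀ δ, 0 < δ → δ < omega1 → (∀ β < δ, ∃ γ ∈ C, β < γ ∧ γ < δ) → δ ∈ C

/-- `S` is a stationary subset of `ω₁`. -/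
def IsStationaryBelow (S : Set Ordinal) : Prop :=
  S ⊆ Set.Iio omega1 ∧ ∀ C, IsClubBelow C → (S ∩ C).Nonempty

/-- `T` is `S`-*-special in the weak sense: there is a regressive `f : T_S → ω₁` such that
whenever `f x = f y = f z`, `x < y` and `x < z`, then `y` and `z` are comparable. -/
def WeakStarSpecial {T : Type*} [PartialOrder T] (t : OmegaOneTree T) (S : Set Ordinal) :
    Prop :=
  ∃ f : {x : T // t.rk x ∈ S} → Ordinal,
    (∀ x : {x : T // t.rk x ∈ S}, f x < t.rk (x : T)) ∧
    ∀ x y z : {x : T // t.rk x ∈ S}, f x = f y → f x = f z →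
      (x : T) < (y : T) → (x : T) < (z : T) → ((y : T) ≤ (z : T) ∨ (z : T) ≤ (y : T))

/-!
A weak *-specializing function for `S` restricted to `S ∩ S'` is combined with an injective
regressive function on the levels in `S' \ S` (even values for the former, odd for the latter);
an injective function never has three nodes `x < y, z` in one fibre. Injective regressive
functions exist on the nodes of any set of limit levels `D` avoiding a club `C`: map a node `x`
of rank `δ` to `sup (C ∩ δ) + n`, where `sup (C ∩ δ) < δ` because `δ ∉ C`, and `n` enumerates
the countably many nodes whose rank lies between consecutive points of `C`.
-/

open Order Function

namespace Ordinal

theorem two_mul_lt_of_isSuccLimit {δ a : Ordinal} (hδ : IsSuccLimit δ) (ha : a < δ) :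
    2 * a < δ :=
  calc 2 * a < 2 * δ := (mul_lt_mul_iff_right₀ two_pos).2 ha
    _ = δ := mul_omega0_dvd two_pos (mod_cast natCast_lt_omega0 2)
      (isSuccPrelimit_iff_omega0_dvd.1 hδ.isSuccPrelimit)

theorem two_mul_add_one_lt_of_isSuccLimit {δ a : Ordinal} (hδ : IsSuccLimit δ) (ha : a < δ) :
    2 * a + 1 < δ :=
  hδ.add_one_lt (two_mul_lt_of_isSuccLimit hδ ha)

theorem two_mul_ne_two_mul_add_one (a b : Ordinal) : 2 * a ≠ 2 * b + 1 := by
  intro h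
  have hmod := congrArg (· % 2) h
  simp only [mul_mod, mul_add_mod_self, mod_eq_of_lt one_lt_two] at hmod
  exact zero_ne_one hmod

theorem countable_Iic_of_lt_omega1 {γ : Ordinal} (hγ : γ < omega1) : (Iic γ).Countable := by
  have hsucc : succ γ < omega1 := (isSuccLimit_ord (aleph0_le_aleph 1)).succ_lt hγ
  rw [← Iio_succ, ← le_aleph0_iff_set_countable, Cardinal.mk_Iio_ordinal, lift_le_aleph0,
    ← lt_aleph_one_iff]
  exact lt_ord.1 hsucc

theorem exists_injective_lt_of_countable_fibers {X : Type*} (r m : X → Ordinal)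
    (hr : ∀ x, IsSuccLimit (r x)) (hm : ∀ x, m x < r x)
    (hsep : ∀ x y, m x < m y → r x ≤ m y) (hfib : ∀ μ, {x | m x = μ}.Countable) :
    ∃ g : X → Ordinal, (∀ x, g x < r x) ∧ Injective g := by
  choose e he using fun μ => Set.countable_iff_exists_injOn.1 (hfib μ)
  let g x := m x + (e (m x) x : ℕ)
  have hg : ∀ x, g x < r x := fun x => (hr x).add_natCast_lt (hm x) _
  have hg_lt : ∀ x y, m x < m y → g x < g y := fun x y hxy =>
    calc g x < r x := hg x
      _ ≤ m y := hsep x y hxy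
      _ ≤ g y := le_self_add
  refine ⟨g, hg, fun x y hxy => ?_⟩
  rcases lt_trichotomy (m x) (m y) with hlt | heq | hgt
  · exact absurd hxy (hg_lt x y hlt).ne
  · have hn : e (m x) x = e (m x) y := by
      simpa only [g, heq, add_right_inj, Nat.cast_inj] using hxy
    exact he (m x) rfl heq.symm hn
  · exact absurd hxy (hg_lt y x hgt).ne'

end Ordinal

open Ordinal

noncomputable def supBelow (C : Set Ordinal) (δ : Ordinal) : Ordinal := sSup (C ∩ Iio δ)

section supBelow

variable {C : Set Ordinal} {γ δ δ' : Ordinal}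

theorem le_supBelow (hγ : γ ∈ C) (hγδ : γ < δ) : γ ≤ supBelow C δ :=
  le_csSup ⟨δ, fun _ h => h.2.le⟩ ⟨hγ, hγδ⟩

theorem supBelow_le : supBelow C δ ≤ δ :=
  csSup_le' fun _ h => h.2.le

theorem le_supBelow_of_supBelow_lt (h : supBelow C δ < supBelow C δ') :
    δ ≤ supBelow C δ' := by
  obtain ⟨γ, ⟨hγC, hγδ'⟩, hlt⟩ := exists_lt_of_lt_csSup' h
  have hδγ : δ ≤ γ := not_lt.1 fun hγδ => (le_supBelow hγC hγδ).not_gt hlt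
  exact hδγ.trans (le_supBelow hγC hγδ')

theorem supBelow_lt (hC : IsClubBelow C) (hδ : IsSuccLimit δ) (hδω : δ < omega1)
    (hδC : δ ∉ C) : supBelow C δ < δ := by
  refine supBelow_le.lt_of_ne fun heq => hδC (hC.2.2 δ hδ.pos hδω fun β hβ => ?_)
  obtain ⟨γ, ⟨hγC, hγδ⟩, hβγ⟩ := exists_lt_of_lt_csSup' (hβ.trans_eq heq.symm)
  exact ⟨γ, hγC, hβγ, hγδ⟩

end supBelow

namespace OmegaOneTree

variable {T : Type*} [PartialOrder T] (t : OmegaOneTree T)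

theorem countable_setOf_rk_le {γ : Ordinal} (hγ : γ < omega1) : {x | t.rk x ≤ γ}.Countable :=
  ((countable_Iic_of_lt_omega1 hγ).biUnion fun β _ => t.levels_countable β).mono
    fun x (hx : t.rk x ≤ γ) =>
      mem_biUnion (show t.rk x ∈ Iic γ from hx) (show x ∈ {y | t.rk y = t.rk x} from rfl)

theorem exists_injective_regressive {C D : Set Ordinal} (hC : IsClubBelow C)
    (hD : ∀ α ∈ D, IsSuccLimit α) (hCD : Disjoint C D) :
    ∃ g : {x // t.rk x ∈ D} → Ordinal, (∀ x, g x < t.rk x) ∧ Injective g := by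
  refine exists_injective_lt_of_countable_fibers (fun x : {x // t.rk x ∈ D} => t.rk x)
    (fun x => supBelow C (t.rk x))
    (fun x => hD _ x.2) (fun x => supBelow_lt hC (hD _ x.2) (t.rk_lt_omega1 x)
      (disjoint_right.1 hCD x.2)) (fun _ _ => le_supBelow_of_supBelow_lt) fun μ => ?_
  by_cases hμ : μ < omega1
  · obtain ⟨γ, hγC, hμγ⟩ := hC.2.1 μ hμ
    refine ((t.countable_setOf_rk_le (hC.1 hγC)).preimage Subtype.val_injective).mono ?_
    intro x (hx : supBelow C _ = μ)
    exact not_lt.1 fun hγx => (hx ▸ le_supBelow hγC hγx).not_gt hμγ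
  · refine Set.countable_empty.mono ?_
    intro x (hx : supBelow C _ = μ)
    exact hμ (hx ▸ supBelow_le.trans_lt (t.rk_lt_omega1 x))

end OmegaOneTree

namespace WeakStarSpecial

variable {T : Type*} [PartialOrder T] {t : OmegaOneTree T} {S S' : Set Ordinal}

theorem of_injective_regressive (hS : WeakStarSpecial t S) (hS' : ∀ α ∈ S', IsSuccLimit α)
    {g : {x // t.rk x ∈ S' \ S} → Ordinal} (hg : ∀ x, g x < t.rk x) (hinj : Injective g) :
    WeakStarSpecial t S' := by
  classical
  obtain ⟨f, hf, hcomp⟩ := hS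
  let F : {x // t.rk x ∈ S'} → Ordinal := fun x =>
    if h : t.rk x.1 ∈ S then 2 * f ⟨x, h⟩ else 2 * g ⟨x, x.2, h⟩ + 1
  refine ⟨F, fun x => ?_, fun x y z hxy hxz hlt₁ hlt₂ => ?_⟩
  · by_cases h : t.rk x.1 ∈ S
    · simpa only [F, dif_pos h] using two_mul_lt_of_isSuccLimit (hS' _ x.2) (hf ⟨x, h⟩)
    · simpa only [F, dif_neg h] using
        two_mul_add_one_lt_of_isSuccLimit (hS' _ x.2) (hg ⟨x, x.2, h⟩)
  by_cases hx : t.rk x.1 ∈ S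
  · have hmem : ∀ w : {x // t.rk x ∈ S'}, F x = F w → t.rk w.1 ∈ S := fun w hw => by
      by_contra h
      simp only [F, dif_pos hx, dif_neg h] at hw
      exact two_mul_ne_two_mul_add_one _ _ hw
    have hy := hmem y hxy
    have hz := hmem z hxz
    simp only [F, dif_pos hx, dif_pos hy, dif_pos hz, mul_eq_mul_left_iff, two_ne_zero,
      or_false] at hxy hxz
    exact hcomp ⟨x, hx⟩ ⟨y, hy⟩ ⟨z, hz⟩ hxy hxz hlt₁ hlt₂
  · have hy : t.rk y.1 ∉ S := fun hy => by
      simp only [F, dif_neg hx, dif_pos hy] at hxy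
      exact two_mul_ne_two_mul_add_one _ _ hxy.symm
    simp only [F, dif_neg hx, dif_neg hy, Order.add_one_inj, mul_eq_mul_left_iff, two_ne_zero,
      or_false] at hxy
    exact absurd (congrArg Subtype.val (hinj hxy)) hlt₁.ne

theorem of_disjoint_club (hS : WeakStarSpecial t S) (hS' : ∀ α ∈ S', IsSuccLimit α)
    {C : Set Ordinal} (hC : IsClubBelow C) (hCS : Disjoint C (S' \ S)) : WeakStarSpecial t S' :=
  have ⟨_, hg, hinj⟩ := t.exists_injective_regressive hC (fun α h => hS' α h.1) hCS
  hS.of_injective_regressive hS' hg hinj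

end WeakStarSpecial

/-- If `T` is an `ω₁`-tree and `S₁`, `S₂` are sets of countable limit
ordinals whose symmetric difference is nonstationary, then `T` is `S₁`-*-special (weak
sense) iff `T` is `S₂`-*-special (weak sense). -/
theorem stmt3 {T : Type*} [PartialOrder T] (t : OmegaOneTree T)
    (S₁ S₂ : Set Ordinal)
    (hS₁ : ∀ α ∈ S₁, α < omega1 ∧ Order.IsSuccLimit α)
    (hS₂ : ∀ α ∈ S₂, α < omega1 ∧ Order.IsSuccLimit α)
    (hns : ∃ C, IsClubBelow C ∧ Disjoint C ((S₁ \ S₂) ∪ (S₂ \ S₁))) :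
    WeakStarSpecial t S₁ ↔ WeakStarSpecial t S₂ := by
  obtain ⟨C, hC, hCS⟩ := hns
  exact ⟨fun h => h.of_disjoint_club (fun α hα => (hS₂ α hα).2) hC
      (hCS.mono_right subset_union_right),
    fun h => h.of_disjoint_club (fun α hα => (hS₁ α hα).2) hC
      (hCS.mono_right subset_union_left)⟩
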